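/- Let Ω = {(x₀,x') ∈ ℝ × ℝ^{n−1} : x₀ > φ(x')} for a Lipschitz function φ with Lipschitz constant L, and fix p ∈ (1,∞) and an admissible aperture a > 0. Suppose dν = f dx and dμ(x) = [sup_{B_{δ(x)/2}(x)} |f|] dx, and assume μ is a Carleson measure in Ω. Then there exists a finite constant C = C(L,a) > 0 such that for every u ∈ L^p_loc(Ω;ℂ) one has ∫_Ω |u(x)|^p dν(x) ≤ C ‖μ‖_C ∫_{∂Ω} (Ñ_{p,a}(u))^p dσ. -/

import Mathlib

open MeasureTheory Metric Set Filter
open scoped ENNReal NNReal Topology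

noncomputable section

namespace DP

/-- Points of the upper half space model: `ℝ^{n+1}` with the Euclidean metric.
(The boundary dimension is `n`; the paper's dimension is `n+1`.) -/
abbrev Pt (n : ℕ) := EuclideanSpace ℝ (Fin (n + 1))

/-- Boundary points `ℝ^n`. -/
abbrev BPt (n : ℕ) := EuclideanSpace ℝ (Fin n)

variable {n : ℕ}

/-- Assemble a point from its height `x0` and horizontal coordinates `x'`. -/
def pt (x0 : ℝ) (x' : BPt n) : Pt n :=
  (EuclideanSpace.equiv (Fin (n + 1)) ℝ).symm
    (Fin.cons x0 (EuclideanSpace.equiv (Fin n) ℝ x'))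

/-- The height `x₀ = δ(x)` of a point (distance to the boundary). -/
def dd (x : Pt n) : ℝ := x 0

/-- Horizontal coordinates of a point. -/
def bdry (x : Pt n) : BPt n :=
  (EuclideanSpace.equiv (Fin n) ℝ).symm (fun i => x i.succ)

/-- The upper half space `Ω = ℝ^{n+1}_+`. -/
def upperHalf (n : ℕ) : Set (Pt n) := {x | 0 < dd x}

/-- The nontangential cone `Γ_a(Q) = {(y₀,y') ∈ Ω : a|q₀ − y₀| > |q' − y'|}`. -/
def cone (a : ℝ) (Q : Pt n) : Set (Pt n) :=
  {y | 0 < dd y ∧ dist (bdry Q) (bdry y) < a * |dd Q - dd y|}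

/-- Truncated cone `Γ_a^h(Q)`. -/
def tcone (a h : ℝ) (Q : Pt n) : Set (Pt n) := cone a Q ∩ {y | dd y ≤ h}

/-- `L^p` average of `w` over the Whitney ball `B_{δ(x)/2}(x)`. -/
def avg (p : ℝ) {E : Type*} [NormedAddCommGroup E] (w : Pt n → E) (x : Pt n) : ℝ≥0∞ :=
  ((volume (ball x (dd x / 2)))⁻¹ *
    ∫⁻ z in ball x (dd x / 2), (‖w z‖₊ : ℝ≥0∞) ^ p) ^ (1 / p)

/-- Averaged nontangential maximal function `Ñ_{p,a}(w)` at `x' ∈ ∂Ω`. -/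
def ntMax (p a : ℝ) {E : Type*} [NormedAddCommGroup E] (w : Pt n → E) (x' : BPt n) : ℝ≥0∞ :=
  ⨆ x ∈ cone a (pt 0 x'), avg p w x

/-- Truncated averaged nontangential maximal function `Ñ^h_{p,a}(w)`. -/
def ntMaxT (p a h : ℝ) {E : Type*} [NormedAddCommGroup E] (w : Pt n → E) (x' : BPt n) : ℝ≥0∞ :=
  ⨆ x ∈ tcone a h (pt 0 x'), avg p w x

/-- Partial derivative `∂_k u`. -/
def pdG {N : ℕ} (u : EuclideanSpace ℝ (Fin N) → ℂ) (k : Fin N)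
    (x : EuclideanSpace ℝ (Fin N)) : ℂ :=
  fderiv ℝ u x (EuclideanSpace.single k (1 : ℝ))

/-- Partial derivative `∂_k u` in the half-space model. -/
def pd (u : Pt n → ℂ) (k : Fin (n + 1)) (x : Pt n) : ℂ := pdG u k x

/-- The `p`-adapted square function of a scalar function `w`, aperture `a`:
`S_{p,a}(w)(x') = (∫_{Γ_a(x')} |∇w|² |w|^{p−2} δ(x)^{2−(n+1)} dx)^{1/2}`. -/
def sqF (p a : ℝ) (w : Pt n → ℂ) (x' : BPt n) : ℝ≥0∞ :=
  (∫⁻ x in cone a (pt 0 x'),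
      (‖fderiv ℝ w x‖₊ : ℝ≥0∞) ^ (2 : ℝ) * (‖w x‖₊ : ℝ≥0∞) ^ (p - 2) *
        ENNReal.ofReal (dd x ^ ((2 : ℝ) - (n + 1)))) ^ (1 / (2 : ℝ))

/-- Truncated `p`-adapted square function `S^h_{p,a}`. -/
def sqFT (p a h : ℝ) (w : Pt n → ℂ) (x' : BPt n) : ℝ≥0∞ :=
  (∫⁻ x in tcone a h (pt 0 x'),
      (‖fderiv ℝ w x‖₊ : ℝ≥0∞) ^ (2 : ℝ) * (‖w x‖₊ : ℝ≥0∞) ^ (p - 2) *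
        ENNReal.ofReal (dd x ^ ((2 : ℝ) - (n + 1)))) ^ (1 / (2 : ℝ))

/-- `S_{p,a}(∇_T u)`: sum of square functions of the tangential derivatives. -/
def sqTan (p a : ℝ) (u : Pt n → ℂ) (x' : BPt n) : ℝ≥0∞ :=
  ∑ k : Fin n, sqF p a (pd u k.succ) x'

/-- Truncated `S^h_{p,a}(∇_T u)`. -/
def sqTanT (p a h : ℝ) (u : Pt n → ℂ) (x' : BPt n) : ℝ≥0∞ :=
  ∑ k : Fin n, sqFT p a h (pd u k.succ) x'

/-- `S_{p,a}(∇u)`: sum of square functions of all partial derivatives. -/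
def sqGrad (p a : ℝ) (u : Pt n → ℂ) (x' : BPt n) : ℝ≥0∞ :=
  ∑ k : Fin (n + 1), sqF p a (pd u k) x'

/-- Truncated `S^h_{p,a}(∇u)`. -/
def sqGradT (p a h : ℝ) (u : Pt n → ℂ) (x' : BPt n) : ℝ≥0∞ :=
  ∑ k : Fin (n + 1), sqFT p a h (pd u k) x'

/-- The ℝ-linear map `J_p(α+iβ) = α/p + iβ/p'`. -/
def Jp (p : ℝ) {N : ℕ} (ξ : Fin N → ℂ) : Fin N → ℂ := fun i =>
  (((ξ i).re / p : ℝ) : ℂ) + Complex.I * (((ξ i).im * (1 - 1 / p) : ℝ) : ℂ)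

/-- `A` is `p`-elliptic on `Ω` with constants `lam` (lower) and `Lam` (upper):
`Re⟨A(x)ξ, J_p ξ⟩ ≥ λ_p |ξ|²` and `|⟨A(x)ξ, η⟩| ≤ Λ|ξ||η|` for a.e. `x ∈ Ω`. -/
def IsPElliptic (p lam Lam : ℝ) {N : ℕ} (Ω : Set (EuclideanSpace ℝ (Fin N)))
    (A : EuclideanSpace ℝ (Fin N) → Fin N → Fin N → ℂ) : Prop :=
  (∀ᵐ x ∂(volume.restrict Ω), ∀ ξ : EuclideanSpace ℂ (Fin N),
      lam * ‖ξ‖ ^ 2 ≤ (∑ i, (∑ j, A x i j * ξ j) * (starRingEnd ℂ) (Jp p ξ i)).re) ∧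
  (∀ᵐ x ∂(volume.restrict Ω), ∀ ξ η : EuclideanSpace ℂ (Fin N),
      ‖∑ i, (∑ j, A x i j * ξ j) * (starRingEnd ℂ) (η i)‖ ≤ Lam * ‖ξ‖ * ‖η‖)

/-- `p₀ = inf{p > 1 : A is p-elliptic}` (for some lower constant, with upper constant `Lam`). -/
def pZero {N : ℕ} (Ω : Set (EuclideanSpace ℝ (Fin N)))
    (A : EuclideanSpace ℝ (Fin N) → Fin N → Fin N → ℂ) (Lam : ℝ) : ℝ :=
  sInf {q : ℝ | 1 < q ∧ ∃ l : ℝ, 0 < l ∧ IsPElliptic q l Lam Ω A}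

/-- The Carleson norm of a measure on the upper half space:
`‖μ‖_C = sup_{Q,r} μ(T(Δ_r(Q))) / σ(Δ_r(Q))`. -/
def carlesonNorm (μ : Measure (Pt n)) : ℝ≥0∞ :=
  ⨆ (Q : BPt n) (r : ℝ) (_ : 0 < r),
    μ (upperHalf n ∩ ball (pt 0 Q) r) / volume (ball (0 : BPt n) r)

/-- The density `sup_{B_{δ(x)/2}(x)} (|∇A|² + |B|²) · δ(x)`. -/
def coefDensity (A : Pt n → Fin (n + 1) → Fin (n + 1) → ℂ)
    (B : Pt n → EuclideanSpace ℂ (Fin (n + 1))) (x : Pt n) : ℝ≥0∞ :=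
  (⨆ y ∈ ball x (dd x / 2),
      ((‖fderiv ℝ A y‖₊ : ℝ≥0∞) ^ (2 : ℝ) + (‖B y‖₊ : ℝ≥0∞) ^ (2 : ℝ))) *
    ENNReal.ofReal (dd x)

/-- The measure `dμ(x) = sup_{B_{δ(x)/2}(x)}(|∇A|² + |B|²) δ(x) dx` on `Ω`. -/
def coefMeasure (A : Pt n → Fin (n + 1) → Fin (n + 1) → ℂ)
    (B : Pt n → EuclideanSpace ℂ (Fin (n + 1))) : Measure (Pt n) :=
  (volume.restrict (upperHalf n)).withDensity (coefDensity A B)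

/-- The density `sup_{B_{δ(x)/2}(x)} |∇A|² · δ(x)` (no drift term). -/
def coefDensityA (A : Pt n → Fin (n + 1) → Fin (n + 1) → ℂ) (x : Pt n) : ℝ≥0∞ :=
  (⨆ y ∈ ball x (dd x / 2), (‖fderiv ℝ A y‖₊ : ℝ≥0∞) ^ (2 : ℝ)) * ENNReal.ofReal (dd x)

/-- The measure `dμ(x) = sup_{B_{δ(x)/2}(x)} |∇A|² δ(x) dx` on `Ω`. -/
def coefMeasureA (A : Pt n → Fin (n + 1) → Fin (n + 1) → ℂ) : Measure (Pt n) :=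
  (volume.restrict (upperHalf n)).withDensity (coefDensityA A)

/-- Weak solution of `∂_i(A_{ij}∂_j u) + B_i ∂_i u = 0` in the upper half space:
`∫ A_{ij} ∂_j u ∂_i φ dx = ∫ B_i ∂_i u φ dx` for all test functions `φ`. -/
def WeakSol (A : Pt n → Fin (n + 1) → Fin (n + 1) → ℂ)
    (B : Pt n → EuclideanSpace ℂ (Fin (n + 1))) (u : Pt n → ℂ) : Prop :=
  ∀ φ : Pt n → ℂ, ContDiff ℝ (⊤ : ℕ∞) φ → HasCompactSupport φ → tsupport φ ⊆ upperHalf n →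
    ∫ x in upperHalf n, ∑ i, ∑ j, A x i j * pd u j x * pd φ i x =
      ∫ x in upperHalf n, (∑ i, B x i * pd u i x) * φ x

/-- Weak solution of `∂_i(A_{ij}∂_j u) = 0` in the upper half space. -/
def WeakSol0 (A : Pt n → Fin (n + 1) → Fin (n + 1) → ℂ) (u : Pt n → ℂ) : Prop :=
  ∀ φ : Pt n → ℂ, ContDiff ℝ (⊤ : ℕ∞) φ → HasCompactSupport φ → tsupport φ ⊆ upperHalf n →
    ∫ x in upperHalf n, ∑ i, ∑ j, A x i j * pd u j x * pd φ i x = 0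

/-- Weak solution of `div(A∇u) = 0` on a general open set `Ω`. -/
def WeakSolOn {N : ℕ} (Ω : Set (EuclideanSpace ℝ (Fin N)))
    (A : EuclideanSpace ℝ (Fin N) → Fin N → Fin N → ℂ)
    (u : EuclideanSpace ℝ (Fin N) → ℂ) : Prop :=
  ∀ φ : EuclideanSpace ℝ (Fin N) → ℂ,
    ContDiff ℝ (⊤ : ℕ∞) φ → HasCompactSupport φ → tsupport φ ⊆ Ω →
      ∫ x in Ω, ∑ i, ∑ j, A x i j * pdG u j x * pdG φ i x = 0

/-- `u` has finite energy: `∇u ∈ L²(Ω)`. -/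
def Energy (u : Pt n → ℂ) : Prop :=
  (∫⁻ x in upperHalf n, (‖fderiv ℝ u x‖₊ : ℝ≥0∞) ^ (2 : ℝ)) < ∞

/-- `u` attains `f` as its boundary datum (a.e. vertical convergence to the trace). -/
def HasTrace (u : Pt n → ℂ) (f : BPt n → ℂ) : Prop :=
  ∀ᵐ x' : BPt n ∂volume, Tendsto (fun t : ℝ => u (pt t x')) (𝓝[>] (0 : ℝ)) (𝓝 (f x'))

/-- The homogeneous Besov `Ḃ^{2,2}_{1/2}(∂Ω)` seminorm (squared). -/
def besovSq (f : BPt n → ℂ) : ℝ≥0∞ :=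
  ∫⁻ x' : BPt n, ∫⁻ y' : BPt n,
    (‖f x' - f y'‖₊ : ℝ≥0∞) ^ (2 : ℝ) * ENNReal.ofReal (dist x' y' ^ (-((n : ℝ) + 1)))

/-- `L^e` "norm" over a boundary set. -/
def lpS (e : ℝ) (s : Set (BPt n)) (g : BPt n → ℝ≥0∞) : ℝ≥0∞ :=
  (∫⁻ x' in s, g x' ^ e) ^ (1 / e)

/-- `L^e` "norm" over the whole boundary. -/
def lpAll (e : ℝ) (g : BPt n → ℝ≥0∞) : ℝ≥0∞ :=
  (∫⁻ x' : BPt n, g x' ^ e) ^ (1 / e)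

/-- Average of an `ℝ≥0∞`-valued function over a set. -/
def avgI {α : Type*} [MeasureSpace α] (s : Set α) (g : α → ℝ≥0∞) : ℝ≥0∞ :=
  (volume s)⁻¹ * ∫⁻ y in s, g y

/-- `h_{ν,a}(W)(x') = inf{t > 0 : sup_{Γ_a((t,x'))} W < ν}` for `ℝ≥0∞`-valued `W`. -/
def hfunE (a ν : ℝ) (W : Pt n → ℝ≥0∞) (x' : BPt n) : ℝ :=
  sInf {t : ℝ | 0 < t ∧ (⨆ z ∈ cone a (pt t x'), W z) < ENNReal.ofReal ν}

/-- `h_{ν,a}(w)` for a nonnegative real-valued `w`. -/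
def hfunR (a ν : ℝ) (w : Pt n → ℝ) (x' : BPt n) : ℝ :=
  hfunE a ν (fun z => ENNReal.ofReal (w z)) x'

/-- Hardy–Littlewood maximal function on the graph `Λ_h`, parametrised by `ℝ^n`. -/
def graphMax (h : BPt n → ℝ) (W : Pt n → ℝ≥0∞) (q' : BPt n) : ℝ≥0∞ :=
  ⨆ (r : ℝ) (_ : 0 < r),
    (volume {z' : BPt n | pt (h z') z' ∈ ball (pt (h q') q') r})⁻¹ *
      ∫⁻ z' in {z' : BPt n | pt (h z') z' ∈ ball (pt (h q') q') r}, W (pt (h z') z')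

/-- Hardy–Littlewood maximal operator restricted to balls contained in `S`. -/
def maxRestr (S : Set (BPt n)) (g : BPt n → ℝ≥0∞) (x' : BPt n) : ℝ≥0∞ :=
  ⨆ (c : BPt n) (ρ : ℝ) (_ : 0 < ρ) (_ : x' ∈ ball c ρ) (_ : ball c ρ ⊆ S),
    (volume (ball c ρ))⁻¹ * ∫⁻ y in ball c ρ, g y


/-! Definitions for the Lipschitz graph domain `Ω = {x₀ > φ(x')}`. -/

/-- `δ(x) = x₀ − φ(x')` for the graph domain. -/
def gdel (φ : BPt n → ℝ) (x : Pt n) : ℝ := dd x - φ (bdry x)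

/-- The graph domain `Ω = {(x₀,x') : x₀ > φ(x')}`. -/
def gdom (φ : BPt n → ℝ) : Set (Pt n) := {x | 0 < gdel φ x}

/-- Cone with vertex at the boundary point `(φ(q'), q')` of the graph domain. -/
def gcone (φ : BPt n → ℝ) (a : ℝ) (q' : BPt n) : Set (Pt n) :=
  {y | y ∈ gdom φ ∧ dist q' (bdry y) < a * |φ q' - dd y|}

/-- `L^p` average over the Whitney ball `B_{δ(x)/2}(x)` in the graph domain. -/
def gavg (φ : BPt n → ℝ) (p : ℝ) (u : Pt n → ℂ) (x : Pt n) : ℝ≥0∞ :=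
  ((volume (ball x (gdel φ x / 2)))⁻¹ *
    ∫⁻ z in ball x (gdel φ x / 2), (‖u z‖₊ : ℝ≥0∞) ^ p) ^ (1 / p)

/-- Averaged nontangential maximal function `Ñ_{p,a}(u)` at the boundary point over `q'`. -/
def gNtMax (φ : BPt n → ℝ) (p a : ℝ) (u : Pt n → ℂ) (q' : BPt n) : ℝ≥0∞ :=
  ⨆ x ∈ gcone φ a q', gavg φ p u x

/-- Carleson norm of a measure on the graph domain. -/
def gCarl (φ : BPt n → ℝ) (μ : Measure (Pt n)) : ℝ≥0∞ :=
  ⨆ (q' : BPt n) (r : ℝ) (_ : 0 < r),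
    μ (gdom φ ∩ ball (pt (φ q') q') r) / volume (ball (0 : BPt n) r)


/-! ### Auxiliary lemmas for the Carleson embedding theorem -/

section CarlesonAux

lemma dd_pt' (t : ℝ) (q' : BPt n) : dd (pt t q') = t := rfl

lemma bdry_pt' (t : ℝ) (q' : BPt n) : bdry (pt t q') = q' := rfl

lemma dist_sq (x z : Pt n) :
    dist x z = Real.sqrt ((dd x - dd z) ^ 2 + dist (bdry x) (bdry z) ^ 2) := by
  rw [EuclideanSpace.dist_eq, EuclideanSpace.dist_eq, Fin.sum_univ_succ]
  congr 2
  · rw [Real.dist_eq, sq_abs]; rfl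
  · rw [Real.sq_sqrt (by positivity)]
    rfl

lemma abs_dd_le (x z : Pt n) : |dd x - dd z| ≤ dist x z := by
  rw [dist_sq]
  calc |dd x - dd z| = Real.sqrt ((dd x - dd z) ^ 2) := (Real.sqrt_sq_eq_abs _).symm
  _ ≤ _ := Real.sqrt_le_sqrt (le_add_of_nonneg_right (by positivity))

lemma dist_bdry_le (x z : Pt n) : dist (bdry x) (bdry z) ≤ dist x z := by
  rw [dist_sq]
  calc dist (bdry x) (bdry z) = Real.sqrt (dist (bdry x) (bdry z) ^ 2) := by
        rw [Real.sqrt_sq dist_nonneg]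
  _ ≤ _ := Real.sqrt_le_sqrt (by nlinarith [sq_nonneg (dd x - dd z)])

lemma dist_le_split (x z : Pt n) :
    dist x z ≤ |dd x - dd z| + dist (bdry x) (bdry z) := by
  rw [dist_sq]
  have h1 : (0:ℝ) ≤ |dd x - dd z| := abs_nonneg _
  have h2 : (0:ℝ) ≤ dist (bdry x) (bdry z) := dist_nonneg
  rw [show (dd x - dd z) ^ 2 = |dd x - dd z| ^ 2 by rw [sq_abs]]
  nlinarith [Real.sq_sqrt (show (0:ℝ) ≤ |dd x - dd z| ^ 2 + dist (bdry x) (bdry z) ^ 2 by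
      positivity),
    Real.sqrt_nonneg (|dd x - dd z| ^ 2 + dist (bdry x) (bdry z) ^ 2)]

lemma ennreal_inv_le_scale {u v k : ℝ≥0∞} (hv0 : v ≠ 0) (hv : v ≠ ∞) (h : v ≤ k * u) :
    u⁻¹ ≤ k * v⁻¹ := by
  rcases eq_or_ne u 0 with rfl | hu0
  · simp only [mul_zero] at h
    exact absurd (le_antisymm h (zero_le)) hv0
  rcases eq_or_ne u ∞ with rfl | hu
  · simp
  rw [← div_eq_mul_inv, ENNReal.le_div_iff_mul_le (Or.inl hv0) (Or.inl hv)]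
  calc u⁻¹ * v ≤ u⁻¹ * (k * u) := mul_le_mul_right h _
  _ = k * (u⁻¹ * u) := by ring
  _ = k := by rw [ENNReal.inv_mul_cancel hu0 hu, mul_one]

lemma layercake {α : Type*} [MeasurableSpace α] (m : Measure α) [SFinite m]
    {g : α → ℝ≥0∞} (hg : Measurable g) :
    ∫⁻ x, g x ∂m = ∫⁻ t in Ioi (0:ℝ), m {x | ENNReal.ofReal t < g x} := by
  have mhs : MeasurableSet {q : α × ℝ | ENNReal.ofReal q.2 < g q.1} :=
    measurableSet_lt (ENNReal.measurable_ofReal.comp measurable_snd) (hg.comp measurable_fst)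
  have key : ∀ c : ℝ≥0∞,
      ∫⁻ t in Ioi (0:ℝ), {t : ℝ | ENNReal.ofReal t < c}.indicator 1 t = c := by
    intro c
    rw [lintegral_indicator_one
      (measurableSet_lt ENNReal.measurable_ofReal measurable_const)]
    rw [Measure.restrict_apply' measurableSet_Ioi]
    rcases eq_or_ne c ∞ with rfl | hc
    · have : {t : ℝ | ENNReal.ofReal t < ∞} ∩ Ioi (0:ℝ) = Ioi 0 := by
        ext t; simp [ENNReal.ofReal_lt_top]
      rw [this, Real.volume_Ioi]
    · have : {t : ℝ | ENNReal.ofReal t < c} ∩ Ioi (0:ℝ) = Ioo 0 c.toReal := by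
        ext t
        simp only [mem_inter_iff, mem_Ioi, mem_setOf_eq, mem_Ioo]
        constructor
        · rintro ⟨hlt, ht⟩
          exact ⟨ht, (ENNReal.ofReal_lt_iff_lt_toReal ht.le hc).mp hlt⟩
        · rintro ⟨ht, hlt⟩
          exact ⟨(ENNReal.ofReal_lt_iff_lt_toReal ht.le hc).mpr hlt, ht⟩
      rw [this, Real.volume_Ioo, sub_zero, ENNReal.ofReal_toReal hc]
  calc ∫⁻ x, g x ∂m
      = ∫⁻ x, ∫⁻ t in Ioi (0:ℝ),
          {q : α × ℝ | ENNReal.ofReal q.2 < g q.1}.indicator 1 (x, t) ∂volume ∂m := by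
        refine lintegral_congr fun x => ?_
        rw [← key (g x)]
        refine lintegral_congr fun t => ?_
        by_cases h : ENNReal.ofReal t < g x <;> simp [Set.indicator_apply, h]
    _ = ∫⁻ t in Ioi (0:ℝ), ∫⁻ x,
          {q : α × ℝ | ENNReal.ofReal q.2 < g q.1}.indicator 1 (x, t) ∂m ∂volume :=
        lintegral_lintegral_swap ((measurable_one.indicator mhs).aemeasurable)
    _ = ∫⁻ t in Ioi (0:ℝ), m {x | ENNReal.ofReal t < g x} := by
        refine lintegral_congr fun t => ?_
        have he : ∀ x : α, ({q : α × ℝ | ENNReal.ofReal q.2 < g q.1}.indicator 1 (x, t) : ℝ≥0∞)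
            = {x : α | ENNReal.ofReal t < g x}.indicator 1 x := by
          intro x
          by_cases h : ENNReal.ofReal t < g x <;> simp [Set.indicator_apply, h]
        simp_rw [he]
        exact lintegral_indicator_one (hg measurableSet_Ioi)

variable {L : ℝ} {φ : BPt n → ℝ}

lemma gdel_lip (hL : 0 ≤ L) (hφ : LipschitzWith (Real.toNNReal L) φ) (x z : Pt n) :
    |gdel φ x - gdel φ z| ≤ (1 + L) * dist x z := by
  have h1 := abs_dd_le x z
  have h2 : dist (φ (bdry x)) (φ (bdry z)) ≤ L * dist (bdry x) (bdry z) := by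
    have := hφ.dist_le_mul (bdry x) (bdry z)
    rwa [Real.coe_toNNReal L hL] at this
  have h3 := dist_bdry_le x z
  have h4 : |φ (bdry x) - φ (bdry z)| ≤ L * dist x z := by
    rw [← Real.dist_eq]
    calc dist (φ (bdry x)) (φ (bdry z)) ≤ L * dist (bdry x) (bdry z) := h2
    _ ≤ L * dist x z := by nlinarith [dist_nonneg (x := bdry x) (y := bdry z)]
  have h5 : gdel φ x - gdel φ z = (dd x - dd z) + (φ (bdry z) - φ (bdry x)) := by
    simp [gdel]; ring
  rw [h5]
  calc |(dd x - dd z) + (φ (bdry z) - φ (bdry x))|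
      ≤ |dd x - dd z| + |φ (bdry z) - φ (bdry x)| := abs_add_le _ _
  _ ≤ dist x z + L * dist x z := by
      have h4' : |φ (bdry z) - φ (bdry x)| ≤ L * dist x z := by rw [abs_sub_comm]; exact h4
      exact add_le_add h1 h4'
  _ = (1 + L) * dist x z := by ring

lemma gdel_continuous (hL : 0 ≤ L) (hφ : LipschitzWith (Real.toNNReal L) φ) :
    Continuous (gdel φ) := by
  refine (LipschitzWith.of_dist_le_mul (K := (1 + L).toNNReal) fun x z => ?_).continuous
  rw [Real.dist_eq, Real.coe_toNNReal _ (by linarith)]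
  exact gdel_lip hL hφ x z

lemma gdom_open (hL : 0 ≤ L) (hφ : LipschitzWith (Real.toNNReal L) φ) :
    IsOpen (gdom φ) :=
  isOpen_lt continuous_const (gdel_continuous hL hφ)

lemma supball_measurable (hL : 0 ≤ L) (hφ : LipschitzWith (Real.toNNReal L) φ)
    (f : Pt n → ℝ≥0∞) :
    Measurable fun x : Pt n => ⨆ y ∈ ball x (gdel φ x / 2), f y := by
  apply LowerSemicontinuous.measurable
  intro x t ht
  simp only [gt_iff_lt] at ht
  rw [lt_iSup_iff] at ht
  obtain ⟨y, hy⟩ := ht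
  rw [lt_iSup_iff] at hy
  obtain ⟨hyx, hfy⟩ := hy
  have hopen : IsOpen {x' : Pt n | dist y x' < gdel φ x' / 2} :=
    isOpen_lt (continuous_const.dist continuous_id) ((gdel_continuous hL hφ).div_const 2)
  filter_upwards [hopen.mem_nhds (by exact hyx)] with x' hx'
  exact lt_of_lt_of_le hfy (le_biSup f hx')

lemma ntmax_measurable (hL : 0 ≤ L) (hφ : LipschitzWith (Real.toNNReal L) φ)
    (p a : ℝ) (u : Pt n → ℂ) :
    Measurable (gNtMax φ p a u) := by
  apply LowerSemicontinuous.measurable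
  intro q t ht
  rw [gNtMax, gt_iff_lt, lt_iSup_iff] at ht
  obtain ⟨x, hx⟩ := ht
  rw [lt_iSup_iff] at hx
  obtain ⟨hxc, hgt⟩ := hx
  have hopen : IsOpen {q' : BPt n | dist q' (bdry x) < a * |φ q' - dd x|} :=
    isOpen_lt (continuous_id.dist continuous_const)
      (continuous_const.mul ((hφ.continuous.sub continuous_const).abs))
  filter_upwards [hopen.mem_nhds (by exact hxc.2)] with q' hq'
  refine lt_of_lt_of_le hgt (le_biSup _ ?_)
  exact ⟨hxc.1, hq'⟩

end CarlesonAux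

section CarlesonGeom

variable {L a : ℝ} {φ : BPt n → ℝ}

/-- Shadow lemma: if `q'` is within `c₂ δ(y)` of `bdry y` (with
`c₂ = a/(2(1+aL))`), then `y` is in the cone over `q'`. -/
lemma shadow_mem (hL : 0 ≤ L) (ha : 0 < a) (hφ : LipschitzWith (Real.toNNReal L) φ)
    {y : Pt n} (hy : y ∈ gdom φ) {q' : BPt n}
    (hq : dist q' (bdry y) < a / (2 * (1 + a * L)) * gdel φ y) :
    y ∈ gcone φ a q' := by
  have hd : 0 < gdel φ y := hy
  have hden : 0 < 1 + a * L := by nlinarith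
  have hc2pos : 0 < a / (2 * (1 + a * L)) := by positivity
  have hφd : |φ q' - φ (bdry y)| ≤ L * dist q' (bdry y) := by
    rw [← Real.dist_eq]
    have := hφ.dist_le_mul q' (bdry y)
    rwa [Real.coe_toNNReal L hL] at this
  have hLc2 : L * (a / (2 * (1 + a * L))) ≤ 1 / 2 := by
    have he : L * (a / (2 * (1 + a * L))) = (L * a) / (2 * (1 + a * L)) := by ring
    rw [he, div_le_div_iff₀ (by positivity) (by norm_num)]
    nlinarith
  have hup : φ q' - φ (bdry y) ≤ gdel φ y / 2 := by
    have h1 : φ q' - φ (bdry y) ≤ L * dist q' (bdry y) :=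
      le_trans (le_abs_self _) hφd
    have h2 : L * dist q' (bdry y) ≤ L * (a / (2 * (1 + a * L)) * gdel φ y) := by
      nlinarith [dist_nonneg (x := q') (y := bdry y)]
    nlinarith
  have hgap : gdel φ y / 2 ≤ dd y - φ q' := by
    have : gdel φ y = dd y - φ (bdry y) := rfl
    nlinarith
  refine ⟨hy, ?_⟩
  have habs : |φ q' - dd y| = dd y - φ q' := by
    rw [abs_sub_comm, abs_of_pos (by nlinarith)]
  rw [habs]
  have hc2a : a / (2 * (1 + a * L)) ≤ a / 2 := by
    apply div_le_div_of_nonneg_left ha.le (by norm_num)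
    nlinarith
  calc dist q' (bdry y) < a / (2 * (1 + a * L)) * gdel φ y := hq
  _ ≤ a / 2 * gdel φ y := by nlinarith
  _ ≤ a * (dd y - φ q') := by nlinarith

/-- Kernel geometry: if `dist y x < c δ(x)` with `c = 1/(4(1+L))`. -/
lemma kernel_geom (hL : 0 ≤ L) (hφ : LipschitzWith (Real.toNNReal L) φ)
    {x y : Pt n} (h : dist y x < 1 / (4 * (1 + L)) * gdel φ x) :
    0 < gdel φ x ∧ dist x y < gdel φ y / 2 ∧ 4 / 5 * gdel φ y ≤ gdel φ x ∧
      gdel φ y / 2 ≤ 5 / 2 * (1 + L) * (1 / (4 * (1 + L)) * gdel φ x) := by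
  have h1L : 0 < 1 + L := by linarith
  have hcpos : 0 < 1 / (4 * (1 + L)) := by positivity
  have hdx : 0 < gdel φ x := by
    by_contra hc
    push_neg at hc
    nlinarith [dist_nonneg (x := y) (y := x)]
  have hlip := gdel_lip hL hφ x y
  rw [dist_comm x y] at hlip
  have hlip2 : |gdel φ x - gdel φ y| < gdel φ x / 4 := by
    calc |gdel φ x - gdel φ y| ≤ (1 + L) * dist y x := hlip
    _ < (1 + L) * (1 / (4 * (1 + L)) * gdel φ x) := by nlinarith
    _ = gdel φ x / 4 := by field_simp
  have habs := abs_lt.mp hlip2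
  have hy34 : 3 / 4 * gdel φ x < gdel φ y := by nlinarith [habs.2]
  have hy54 : gdel φ y < 5 / 4 * gdel φ x := by nlinarith [habs.1]
  refine ⟨hdx, ?_, by nlinarith, ?_⟩
  · rw [dist_comm]
    have hc14 : 1 / (4 * (1 + L)) ≤ 1 / 4 := by
      apply div_le_div_of_nonneg_left (by norm_num) (by norm_num)
      nlinarith
    calc dist y x < 1 / (4 * (1 + L)) * gdel φ x := h
    _ ≤ 1 / 4 * gdel φ x := by nlinarith
    _ < gdel φ y / 2 := by nlinarith
  · have : 5 / 2 * (1 + L) * (1 / (4 * (1 + L)) * gdel φ x) = 5 / 8 * gdel φ x := by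
      field_simp; ring
    rw [this]
    nlinarith

/-- Tent geometry for the Vitali covering argument. -/
lemma tent_geom (hL : 0 ≤ L) (ha : 0 < a) (hφ : LipschitzWith (Real.toNNReal L) φ)
    {y b : Pt n} (hy : y ∈ gdom φ) (hb : b ∈ gdom φ)
    (hint : (ball (bdry y) (a / (2 * (1 + a * L)) * gdel φ y) ∩
      ball (bdry b) (a / (2 * (1 + a * L)) * gdel φ b)).Nonempty)
    (hδ : a / (2 * (1 + a * L)) * gdel φ y ≤ 4 * (a / (2 * (1 + a * L)) * gdel φ b)) :
    dist y (pt (φ (bdry b)) (bdry b)) <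
      (5 + 5 * L * (a / (2 * (1 + a * L))) + 5 * (a / (2 * (1 + a * L)))) * gdel φ b := by
  set c2 := a / (2 * (1 + a * L)) with hc2
  have hden : 0 < 1 + a * L := by nlinarith
  have hc2pos : 0 < c2 := by rw [hc2]; positivity
  have hdy : 0 < gdel φ y := hy
  have hdb : 0 < gdel φ b := hb
  have hδ' : gdel φ y ≤ 4 * gdel φ b := by nlinarith
  obtain ⟨z, hz1, hz2⟩ := hint
  rw [mem_ball] at hz1 hz2
  have hbb : dist (bdry y) (bdry b) ≤ 5 * c2 * gdel φ b := by
    calc dist (bdry y) (bdry b) ≤ dist (bdry y) z + dist z (bdry b) := dist_triangle _ _ _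
    _ = dist z (bdry y) + dist z (bdry b) := by rw [dist_comm]
    _ ≤ c2 * gdel φ y + c2 * gdel φ b := by nlinarith
    _ ≤ 5 * c2 * gdel φ b := by nlinarith
  have hφbb : |φ (bdry y) - φ (bdry b)| ≤ L * (5 * c2 * gdel φ b) := by
    have h2 : dist (φ (bdry y)) (φ (bdry b)) ≤ L * dist (bdry y) (bdry b) := by
      have := hφ.dist_le_mul (bdry y) (bdry b)
      rwa [Real.coe_toNNReal L hL] at this
    rw [← Real.dist_eq]
    nlinarith [dist_nonneg (x := bdry y) (y := bdry b)]
  have hsplit := dist_le_split y (pt (φ (bdry b)) (bdry b))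
  rw [dd_pt', bdry_pt'] at hsplit
  have hvert : |dd y - φ (bdry b)| ≤ 4 * gdel φ b + L * (5 * c2 * gdel φ b) := by
    calc |dd y - φ (bdry b)|
        ≤ |dd y - φ (bdry y)| + |φ (bdry y) - φ (bdry b)| := abs_sub_le _ _ _
    _ ≤ 4 * gdel φ b + L * (5 * c2 * gdel φ b) := by
        have : |dd y - φ (bdry y)| = gdel φ y := abs_of_pos hdy
        nlinarith
  calc dist y (pt (φ (bdry b)) (bdry b))
      ≤ |dd y - φ (bdry b)| + dist (bdry y) (bdry b) := hsplit
  _ ≤ 4 * gdel φ b + L * (5 * c2 * gdel φ b) + 5 * c2 * gdel φ b := by nlinarith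
  _ < (5 + 5 * L * c2 + 5 * c2) * gdel φ b := by nlinarith

lemma vol_ball_eucl {m : ℕ} (x : EuclideanSpace ℝ (Fin m)) {r : ℝ} (hr : 0 < r) :
    volume (ball x r) =
      ENNReal.ofReal (r ^ m) * volume (ball (0 : EuclideanSpace ℝ (Fin m)) 1) := by
  rw [MeasureTheory.Measure.addHaar_ball_of_pos _ x hr, finrank_euclideanSpace_fin]

lemma vol_univ_bpt0 : (volume : Measure (BPt 0)) univ = 1 := by
  have h := (EuclideanSpace.volume_preserving_symm_measurableEquiv_toLp (Fin 0)).measure_preimage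
    (MeasurableSet.univ).nullMeasurableSet
  simp only [Set.preimage_univ] at h
  rw [h, MeasureTheory.volume_pi, Measure.pi_univ]
  simp

instance : Subsingleton (BPt 0) := ⟨fun a b => by ext i; exact i.elim0⟩

lemma vol_ball_bpt0 {r : ℝ} (hr : 0 < r) (x : BPt 0) : volume (ball x r) = 1 := by
  have : ball x r = univ := by
    ext z
    simp only [mem_ball, mem_univ, iff_true]
    rw [Subsingleton.elim z x, dist_self]
    exact hr
  rw [this, vol_univ_bpt0]

end CarlesonGeom

set_option maxHeartbeats 2000000 in
/-- Theorem `T:Car`, Carleson embedding: if `dν = f dx` and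
`dμ = [sup_{B_{δ(x)/2}(x)} |f|] dx` is Carleson on the Lipschitz graph domain
`Ω = {x₀ > φ(x')}`, then `∫_Ω |u|^p dν ≤ C ‖μ‖_C ∫_{∂Ω} (Ñ_{p,a}(u))^p dσ`, with
`C = C(L,a)` (the boundary is parametrised by `ℝ^n`). -/
theorem carleson_embedding
    (n : ℕ) (L a : ℝ) (hL : 0 ≤ L) (ha : 0 < a) (haL : L < 1 / a) :
    ∃ C : ℝ, 0 < C ∧
      ∀ (φ : BPt n → ℝ), LipschitzWith (Real.toNNReal L) φ →
      ∀ (p : ℝ), 1 < p →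
      ∀ (f : Pt n → ℝ≥0∞) (u : Pt n → ℂ),
        gCarl φ ((volume.restrict (gdom φ)).withDensity
            (fun x => ⨆ y ∈ ball x (gdel φ x / 2), f y)) < ∞ →
        (∫⁻ x in gdom φ, (‖u x‖₊ : ℝ≥0∞) ^ p * f x) ≤
          ENNReal.ofReal C *
            gCarl φ ((volume.restrict (gdom φ)).withDensity
              (fun x => ⨆ y ∈ ball x (gdel φ x / 2), f y)) *
            ∫⁻ q' : BPt n, (gNtMax φ p a u q') ^ p := by
  classical
  have hden : (0:ℝ) < 1 + a * L := by nlinarith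
  have hc2 : (0:ℝ) < a / (2 * (1 + a * L)) := by positivity
  have h1L : (0:ℝ) < 1 + L := by linarith
  have hC3 : (0:ℝ) < 5 + 5 * L * (a / (2 * (1 + a * L))) + 5 * (a / (2 * (1 + a * L))) := by
    positivity
  refine ⟨(5 / 2 * (1 + L)) ^ (n + 1) *
      (((5 + 5 * L * (a / (2 * (1 + a * L))) + 5 * (a / (2 * (1 + a * L)))) /
        (a / (2 * (1 + a * L)))) ^ n + 1), by positivity, ?_⟩
  intro φ hφ p hp f u hCarl
  have hp0 : (0:ℝ) < p := by linarith
  have hΩo : IsOpen (gdom φ) := gdom_open hL hφ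
  have hΩm : MeasurableSet (gdom φ) := hΩo.measurableSet
  set M : Pt n → ℝ≥0∞ := fun x => ⨆ y ∈ ball x (gdel φ x / 2), f y with hMdef
  set μ : Measure (Pt n) := (volume.restrict (gdom φ)).withDensity M with hμdef
  set A : ℝ≥0∞ := gCarl φ μ with hAdef
  set N : BPt n → ℝ≥0∞ := gNtMax φ p a u with hNdef
  have hM : Measurable M := supball_measurable hL hφ f
  have hN : Measurable N := ntmax_measurable hL hφ p a u
  have hNp : Measurable fun q' => N q' ^ p :=
    ENNReal.continuous_rpow_const.measurable.comp hN
  set G : Pt n → ℝ≥0∞ := fun y =>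
    (volume (ball y (gdel φ y / 2)))⁻¹ *
      ∫⁻ z in ball y (gdel φ y / 2), (‖u z‖₊ : ℝ≥0∞) ^ p with hGdef
  -- μ of a measurable set
  have hμapp : ∀ s : Set (Pt n), MeasurableSet s →
      μ s = ∫⁻ y in s ∩ gdom φ, M y ∂volume := by
    intro s hs
    rw [hμdef, withDensity_apply _ hs, Measure.restrict_restrict hs]
  -- Carleson bound on tents
  have hcarl_ball : ∀ (q' : BPt n) (r : ℝ), 0 < r →
      μ (gdom φ ∩ ball (pt (φ q') q') r) ≤ A * volume (ball (0 : BPt n) r) := by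
    intro q' r hr
    have hv0 : volume (ball (0 : BPt n) r) ≠ 0 := (measure_ball_pos volume 0 hr).ne'
    have hvt : volume (ball (0 : BPt n) r) ≠ ∞ := measure_ball_lt_top.ne
    have hle : μ (gdom φ ∩ ball (pt (φ q') q') r) / volume (ball (0 : BPt n) r) ≤ A := by
      rw [hAdef]
      simp only [gCarl]
      exact le_iSup₂_of_le q' r (le_iSup_of_le hr le_rfl)
    calc μ (gdom φ ∩ ball (pt (φ q') q') r)
        = μ (gdom φ ∩ ball (pt (φ q') q') r) / volume (ball (0 : BPt n) r) *
          volume (ball (0 : BPt n) r) := (ENNReal.div_mul_cancel hv0 hvt).symm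
      _ ≤ A * volume (ball (0 : BPt n) r) := mul_le_mul_left hle _
  -- G bounded by N^p over shadows
  have hGN : ∀ y ∈ gdom φ, ∀ q' : BPt n,
      dist q' (bdry y) < a / (2 * (1 + a * L)) * gdel φ y → G y ≤ N q' ^ p := by
    intro y hy q' hq'
    have hcone : y ∈ gcone φ a q' := shadow_mem hL ha hφ hy hq'
    have h1 : gavg φ p u y ≤ N q' := by
      rw [hNdef, gNtMax]
      exact le_biSup _ hcone
    have h2 : gavg φ p u y ^ p ≤ N q' ^ p := ENNReal.rpow_le_rpow h1 hp0.le
    have h3 : gavg φ p u y ^ p = G y := by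
      rw [gavg, ← ENNReal.rpow_mul, one_div_mul_cancel hp0.ne', ENNReal.rpow_one, hGdef]
    rwa [h3] at h2
  -- a.e. finiteness of M on the domain
  have hMfin : volume ({y | M y = ∞} ∩ gdom φ) = 0 := by
    by_contra hvol
    set E : Set (Pt n) := {y | M y = ∞} ∩ gdom φ with hEdef
    have hEm : MeasurableSet E := (hM (measurableSet_singleton ∞)).inter hΩm
    have hcov : E ⊆ ⋃ k : ℕ, E ∩ ball (pt (φ (0 : BPt n)) (0 : BPt n)) (k + 1) := by
      intro y hy
      obtain ⟨k, hk⟩ := exists_nat_gt (dist y (pt (φ (0 : BPt n)) (0 : BPt n)))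
      exact mem_iUnion.2 ⟨k, hy, mem_ball.2 (hk.trans (lt_add_one _))⟩
    have hpos : ∃ k : ℕ, volume (E ∩ ball (pt (φ (0 : BPt n)) (0 : BPt n)) (k + 1)) ≠ 0 := by
      by_contra hall
      push_neg at hall
      apply hvol
      refine le_antisymm ?_ (zero_le)
      calc volume E ≤ volume (⋃ k : ℕ, E ∩ ball (pt (φ (0 : BPt n)) (0 : BPt n)) (k + 1)) := measure_mono hcov
        _ ≤ ∑' k : ℕ, volume (E ∩ ball (pt (φ (0 : BPt n)) (0 : BPt n)) (k + 1)) := measure_iUnion_le _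
        _ = 0 := by simp [hall]
    obtain ⟨k, hk⟩ := hpos
    have hμtop : μ (gdom φ ∩ ball (pt (φ (0 : BPt n)) (0 : BPt n)) (k + 1)) = ∞ := by
      rw [hμapp _ (hΩm.inter measurableSet_ball)]
      have hsub : E ∩ ball (pt (φ (0 : BPt n)) (0 : BPt n)) (k + 1) ⊆
          (gdom φ ∩ ball (pt (φ (0 : BPt n)) (0 : BPt n)) (k + 1)) ∩ gdom φ := by
        intro y hy
        exact ⟨⟨hy.1.2, hy.2⟩, hy.1.2⟩
      refine top_le_iff.mp ?_
      calc (⊤ : ℝ≥0∞) = ⊤ * volume (E ∩ ball (pt (φ (0 : BPt n)) (0 : BPt n)) (k + 1)) :=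
            (ENNReal.top_mul hk).symm
        _ = ∫⁻ y in E ∩ ball (pt (φ (0 : BPt n)) (0 : BPt n)) (k + 1), ⊤ ∂volume := by
            rw [setLIntegral_const]
        _ = ∫⁻ y in E ∩ ball (pt (φ (0 : BPt n)) (0 : BPt n)) (k + 1), M y ∂volume := by
            refine setLIntegral_congr_fun (hEm.inter measurableSet_ball) ?_
            exact fun y hy => hy.1.1.symm
        _ ≤ _ := lintegral_mono' (Measure.restrict_mono hsub le_rfl) le_rfl
    have hAtop : A = ∞ := by
      by_contra h
      have hvt : volume (ball (0 : BPt n) ((k:ℝ) + 1)) ≠ ∞ := measure_ball_lt_top.ne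
      have hfin : A * volume (ball (0 : BPt n) ((k:ℝ) + 1)) ≠ ∞ := ENNReal.mul_ne_top h hvt
      have hb := hcarl_ball 0 ((k:ℝ) + 1) (by positivity)
      rw [hμtop] at hb
      exact hfin (top_le_iff.mp hb)
    exact hCarl.ne hAtop
  rcases eq_or_ne A 0 with hA0 | hA0
  · -- trivial case: the Carleson norm vanishes
    have hμuniv : μ univ = 0 := by
      have hcov : (univ : Set (Pt n)) = ⋃ k : ℕ, ball (pt (φ (0 : BPt n)) (0 : BPt n)) (k + 1) := by
        refine (eq_univ_iff_forall.mpr fun y => ?_).symm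
        obtain ⟨k, hk⟩ := exists_nat_gt (dist y (pt (φ (0 : BPt n)) (0 : BPt n)))
        exact mem_iUnion.2 ⟨k, mem_ball.2 (hk.trans (lt_add_one _))⟩
      have hmono : Monotone fun k : ℕ => ball (pt (φ (0 : BPt n)) (0 : BPt n)) ((k:ℝ) + 1) := by
        intro i j hij
        exact ball_subset_ball (by exact_mod_cast add_le_add_left (Nat.cast_le.2 hij) 1)
      rw [hcov, hmono.measure_iUnion]
      refine le_antisymm (iSup_le fun k => ?_) (zero_le)
      have h1 : μ (ball (pt (φ (0 : BPt n)) (0 : BPt n)) ((k:ℝ) + 1)) =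
          μ (gdom φ ∩ ball (pt (φ (0 : BPt n)) (0 : BPt n)) ((k:ℝ) + 1)) := by
        rw [hμapp _ measurableSet_ball, hμapp _ (hΩm.inter measurableSet_ball)]
        rw [inter_assoc, inter_comm (ball _ _), ← inter_assoc, inter_self]
      rw [h1]
      calc μ (gdom φ ∩ ball (pt (φ (0 : BPt n)) (0 : BPt n)) ((k:ℝ) + 1))
          ≤ A * volume (ball (0 : BPt n) ((k:ℝ) + 1)) := hcarl_ball 0 _ (by positivity)
        _ = 0 := by rw [hA0, zero_mul]
    have hMae : M =ᵐ[volume.restrict (gdom φ)] 0 := by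
      have h0 : ∫⁻ y, M y ∂(volume.restrict (gdom φ)) = 0 := by
        have h := hμapp univ MeasurableSet.univ
        rw [hμuniv, univ_inter] at h
        exact h.symm
      exact (lintegral_eq_zero_iff hM).mp h0
    have hbound : (∫⁻ x in gdom φ, (‖u x‖₊ : ℝ≥0∞) ^ p * f x) = 0 := by
      have h1 : (∫⁻ x in gdom φ, (‖u x‖₊ : ℝ≥0∞) ^ p * f x) ≤
          ∫⁻ x in gdom φ, (‖u x‖₊ : ℝ≥0∞) ^ p * M x ∂volume := by
        refine lintegral_mono_ae ((ae_restrict_iff' hΩm).2 (ae_of_all _ fun x hx => ?_))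
        refine mul_le_mul_right ?_ _
        have hx' : (0:ℝ) < gdel φ x := hx
        exact le_biSup f (mem_ball_self (by positivity))
      have h2 : (∫⁻ x in gdom φ, (‖u x‖₊ : ℝ≥0∞) ^ p * M x ∂volume) = 0 := by
        have : (fun x => (‖u x‖₊ : ℝ≥0∞) ^ p * M x) =ᵐ[volume.restrict (gdom φ)]
            (fun _ => 0) := hMae.mono fun x hx => by simp [hx]
        rw [lintegral_congr_ae this, lintegral_zero]
      exact le_antisymm (h1.trans h2.le) (zero_le)
    rw [hbound, hA0]
    simp
  · have stepA : (∫⁻ x in gdom φ, (‖u x‖₊ : ℝ≥0∞) ^ p * f x) ≤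
        ENNReal.ofReal ((5 / 2 * (1 + L)) ^ (n + 1)) *
          ∫⁻ y in gdom φ, M y * G y ∂volume := by
      set cc : ℝ := 1 / (4 * (1 + L)) with hccdef
      have hccpos : (0:ℝ) < cc := by rw [hccdef]; positivity
      set C1 : ℝ≥0∞ := ENNReal.ofReal ((5 / 2 * (1 + L)) ^ (n + 1)) with hC1def
      have hC1top : C1 ≠ ∞ := ENNReal.ofReal_ne_top
      set V : ℝ≥0∞ := volume (ball (0 : Pt n) 1) with hVdef
      set VB : Pt n → ℝ≥0∞ := fun x => ENNReal.ofReal ((cc * gdel φ x) ^ (n + 1)) * V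
        with hVBdef
      have hVB : ∀ x : Pt n, 0 < gdel φ x → VB x = volume (ball x (cc * gdel φ x)) := by
        intro x hx
        rw [vol_ball_eucl x (by positivity)]
      have hVB0 : ∀ x : Pt n, 0 < gdel φ x → VB x ≠ 0 ∧ VB x ≠ ∞ := by
        intro x hx
        rw [hVB x hx]
        exact ⟨(measure_ball_pos volume x (by positivity)).ne', measure_ball_lt_top.ne⟩
      set K : Pt n → Pt n → ℝ≥0∞ :=
        fun x y => (VB x)⁻¹ * (ball x (cc * gdel φ x)).indicator 1 y with hKdef
      have hgdelc : Continuous (gdel φ) := gdel_continuous hL hφ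
      have hVBm : Measurable VB := by
        rw [hVBdef]
        exact (ENNReal.measurable_ofReal.comp
          ((continuous_const.mul hgdelc).pow (n + 1)).measurable).mul_const _
      have hKm : Measurable (fun q : Pt n × Pt n => K q.1 q.2) := by
        refine Measurable.mul ((hVBm.comp measurable_fst).inv) ?_
        have hS : MeasurableSet {q : Pt n × Pt n | q.2 ∈ ball q.1 (cc * gdel φ q.1)} := by
          have ho : IsOpen {q : Pt n × Pt n | dist q.2 q.1 < cc * gdel φ q.1} :=
            isOpen_lt (continuous_snd.dist continuous_fst)
              (continuous_const.mul (hgdelc.comp continuous_fst))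
          exact ho.measurableSet
        have heq : (fun q : Pt n × Pt n =>
              (ball q.1 (cc * gdel φ q.1)).indicator (1 : Pt n → ℝ≥0∞) q.2) =
            ({q : Pt n × Pt n | q.2 ∈ ball q.1 (cc * gdel φ q.1)}).indicator
              (1 : Pt n × Pt n → ℝ≥0∞) := by
          ext q
          by_cases hq : q.2 ∈ ball q.1 (cc * gdel φ q.1)
          · simp [Set.indicator_apply, hq, mem_ball.mp hq]
          · have hq' : ¬ dist q.2 q.1 < cc * gdel φ q.1 := fun hh => hq (mem_ball.mpr hh)
            simp [Set.indicator_apply, hq, hq']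
        rw [heq]
        exact measurable_one.indicator hS
      obtain ⟨h, hhm, hhle, hhint⟩ := exists_measurable_le_lintegral_eq volume
        ((gdom φ).indicator fun x => (‖u x‖₊ : ℝ≥0∞) ^ p * f x)
      have hLHS : (∫⁻ x in gdom φ, (‖u x‖₊ : ℝ≥0∞) ^ p * f x) = ∫⁻ x, h x ∂volume := by
        rw [← lintegral_indicator hΩm]
        exact hhint
      have hh0 : ∀ x, x ∉ gdom φ → h x = 0 := by
        intro x hx
        refine le_antisymm ?_ (zero_le)
        have := hhle x
        rwa [indicator_of_notMem hx] at this
      have hK1 : ∀ x ∈ gdom φ, ∫⁻ y, K x y ∂volume = 1 := by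
        intro x hx
        have hx' : (0:ℝ) < gdel φ x := hx
        have h0 := hVB0 x hx'
        simp only [hKdef]
        rw [lintegral_const_mul' _ _ (ENNReal.inv_ne_top.2 h0.1),
          lintegral_indicator_one measurableSet_ball, ← hVB x hx',
          ENNReal.inv_mul_cancel h0.1 h0.2]
      have haefin : ∀ᵐ y ∂(volume : Measure (Pt n)), ¬(y ∈ {y | M y = ∞} ∩ gdom φ) := by
        rw [ae_iff]
        simp only [not_not]; exact hMfin
      calc (∫⁻ x in gdom φ, (‖u x‖₊ : ℝ≥0∞) ^ p * f x)
          = ∫⁻ x, h x ∂volume := hLHS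
        _ = ∫⁻ x, ∫⁻ y, h x * K x y ∂volume ∂volume := by
            refine lintegral_congr fun x => ?_
            rw [lintegral_const_mul (h x)
              ((measurable_one.indicator measurableSet_ball).const_mul _)]
            by_cases hx : x ∈ gdom φ
            · rw [hK1 x hx, mul_one]
            · rw [hh0 x hx, zero_mul]
        _ = ∫⁻ y, ∫⁻ x, h x * K x y ∂volume ∂volume :=
            lintegral_lintegral_swap ((hhm.comp measurable_fst).mul hKm).aemeasurable
        _ ≤ ∫⁻ y, (gdom φ).indicator (fun y' => C1 * (M y' * G y')) y ∂volume := by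
            refine lintegral_mono_ae ?_
            filter_upwards [haefin] with y hy
            by_cases hyΩ : y ∈ gdom φ
            · have hMyfin : M y ≠ ∞ := fun hMt => hy ⟨hMt, hyΩ⟩
              have hδy : (0:ℝ) < gdel φ y := hyΩ
              have hvy0 : volume (ball y (gdel φ y / 2)) ≠ 0 :=
                (measure_ball_pos volume y (by positivity)).ne'
              have hvyt : volume (ball y (gdel φ y / 2)) ≠ ∞ := measure_ball_lt_top.ne
              rw [indicator_of_mem hyΩ]
              have hpt : ∀ x, h x * K x y ≤
                  (M y * (C1 * (volume (ball y (gdel φ y / 2)))⁻¹)) *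
                    (ball y (gdel φ y / 2)).indicator
                      (fun z => (‖u z‖₊ : ℝ≥0∞) ^ p) x := by
                intro x
                by_cases hxy : y ∈ ball x (cc * gdel φ x)
                · have hmem := mem_ball.mp hxy
                  rw [hccdef] at hmem
                  obtain ⟨hδx, hdxy, h45, h58⟩ := kernel_geom hL hφ hmem
                  rw [← hccdef] at h58
                  have hxΩ : x ∈ gdom φ := hδx
                  have hhx : h x ≤ (‖u x‖₊ : ℝ≥0∞) ^ p * f x := by
                    have := hhle x
                    rwa [indicator_of_mem hxΩ] at this
                  have hfM : f x ≤ M y := le_biSup f (mem_ball.mpr hdxy)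
                  have hxball : x ∈ ball y (gdel φ y / 2) := mem_ball.mpr hdxy
                  have hKxy : K x y = (VB x)⁻¹ := by
                    simp only [hKdef]
                    rw [Set.indicator_of_mem hxy, Pi.one_apply, mul_one]
                  have hvol_le : volume (ball y (gdel φ y / 2)) ≤ C1 * VB x := by
                    rw [vol_ball_eucl y (by positivity), hVBdef, hC1def, ← mul_assoc,
                      ← ENNReal.ofReal_mul (by positivity)]
                    refine mul_le_mul_left (ENNReal.ofReal_le_ofReal ?_) _
                    calc (gdel φ y / 2) ^ (n + 1)
                        ≤ (5 / 2 * (1 + L) * (cc * gdel φ x)) ^ (n + 1) :=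
                          pow_le_pow_left₀ (by positivity) h58 _
                      _ = (5 / 2 * (1 + L)) ^ (n + 1) * (cc * gdel φ x) ^ (n + 1) :=
                          mul_pow _ _ _
                  have hinv : (VB x)⁻¹ ≤ C1 * (volume (ball y (gdel φ y / 2)))⁻¹ :=
                    ennreal_inv_le_scale hvy0 hvyt hvol_le
                  calc h x * K x y = h x * (VB x)⁻¹ := by rw [hKxy]
                    _ ≤ ((‖u x‖₊ : ℝ≥0∞) ^ p * M y) *
                        (C1 * (volume (ball y (gdel φ y / 2)))⁻¹) :=
                        mul_le_mul' (hhx.trans (mul_le_mul_right hfM _)) hinv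
                    _ = (M y * (C1 * (volume (ball y (gdel φ y / 2)))⁻¹)) *
                        (‖u x‖₊ : ℝ≥0∞) ^ p := by ring
                    _ = _ := by rw [Set.indicator_of_mem hxball]
                · have hKxy : K x y = 0 := by
                    simp only [hKdef]
                    rw [Set.indicator_of_notMem hxy, mul_zero]
                  rw [hKxy, mul_zero]
                  exact zero_le
              calc ∫⁻ x, h x * K x y ∂volume
                  ≤ ∫⁻ x, (M y * (C1 * (volume (ball y (gdel φ y / 2)))⁻¹)) *
                      (ball y (gdel φ y / 2)).indicator
                        (fun z => (‖u z‖₊ : ℝ≥0∞) ^ p) x ∂volume := lintegral_mono hpt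
                _ = (M y * (C1 * (volume (ball y (gdel φ y / 2)))⁻¹)) *
                      ∫⁻ x in ball y (gdel φ y / 2), (‖u x‖₊ : ℝ≥0∞) ^ p ∂volume := by
                    rw [lintegral_const_mul' _ _
                        (ENNReal.mul_ne_top hMyfin
                          (ENNReal.mul_ne_top hC1top (ENNReal.inv_ne_top.2 hvy0))),
                      lintegral_indicator measurableSet_ball]
                _ = C1 * (M y * G y) := by rw [hGdef]; ring
            · rw [indicator_of_notMem hyΩ]
              have hzero : ∀ x, h x * K x y = 0 := by
                intro x
                by_cases hxy : y ∈ ball x (cc * gdel φ x)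
                · exfalso
                  have hmem := mem_ball.mp hxy
                  rw [hccdef] at hmem
                  obtain ⟨hδx, hdxy, -, -⟩ := kernel_geom hL hφ hmem
                  exact hyΩ (show (0:ℝ) < gdel φ y by
                    nlinarith [dist_nonneg (x := x) (y := y)])
                · have hKxy : K x y = 0 := by
                    simp only [hKdef]
                    rw [Set.indicator_of_notMem hxy, mul_zero]
                  rw [hKxy, mul_zero]
              simp [lintegral_congr hzero]
        _ = C1 * ∫⁻ y in gdom φ, M y * G y ∂volume := by
            rw [lintegral_indicator hΩm, lintegral_const_mul' _ _ hC1top]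
    have stepB : (∫⁻ y in gdom φ, M y * G y ∂volume) ≤
        ENNReal.ofReal
            (((5 + 5 * L * (a / (2 * (1 + a * L))) + 5 * (a / (2 * (1 + a * L)))) /
              (a / (2 * (1 + a * L)))) ^ n + 1) *
          (A * ∫⁻ q' : BPt n, N q' ^ p) := by
      haveI hsf : SFinite μ := by rw [hμdef]; infer_instance
      have hMfinres : ∀ᵐ y ∂(volume.restrict (gdom φ)), M y < ∞ := by
        rw [ae_iff]
        have hset : {y : Pt n | ¬ M y < ∞} = {y | M y = ∞} := by
          ext y
          simp [lt_top_iff_ne_top, not_not]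
        rw [Measure.restrict_apply (by rw [hset]; exact hM (measurableSet_singleton ∞)),
          hset]
        exact hMfin
      have htrans : (∫⁻ y in gdom φ, M y * G y ∂volume) = ∫⁻ y, G y ∂μ := by
        rw [hμdef, lintegral_withDensity_eq_lintegral_mul_non_measurable _ hM hMfinres]
        rfl
      obtain ⟨G', hG'm, hG'le, hG'int⟩ := exists_measurable_le_lintegral_eq μ G
      have claim : ∀ t : ℝ, μ {y | ENNReal.ofReal t < G' y} ≤
          ENNReal.ofReal (((5 + 5 * L * (a / (2 * (1 + a * L))) + 5 * (a / (2 * (1 + a * L)))) / (a / (2 * (1 + a * L)))) ^ n + 1) *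
            (A * volume {q' : BPt n | ENNReal.ofReal t < N q' ^ p}) := by
        intro t
        have hSm : MeasurableSet {y | ENNReal.ofReal t < G' y} :=
          measurableSet_lt measurable_const hG'm
        have hμS : μ {y | ENNReal.ofReal t < G' y} =
            ∫⁻ y in {y | ENNReal.ofReal t < G' y} ∩ gdom φ, M y ∂volume := hμapp _ hSm
        have hμS2 : μ ({y | ENNReal.ofReal t < G' y} ∩ gdom φ) =
            ∫⁻ y in {y | ENNReal.ofReal t < G' y} ∩ gdom φ, M y ∂volume := by
          rw [hμapp _ (hSm.inter hΩm), inter_assoc, inter_self]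
        have hSsh : ∀ y ∈ {y | ENNReal.ofReal t < G' y} ∩ gdom φ,
            ball (bdry y) ((a / (2 * (1 + a * L))) * gdel φ y) ⊆
              {q' : BPt n | ENNReal.ofReal t < N q' ^ p} := by
          intro y hy q' hq'
          have h1 : G y ≤ N q' ^ p := hGN y hy.2 q' (mem_ball.mp hq')
          exact lt_of_lt_of_le (lt_of_lt_of_le hy.1 (hG'le y)) h1
        have hone : (1:ℝ≥0∞) ≤ ENNReal.ofReal
            (((5 + 5 * L * (a / (2 * (1 + a * L))) + 5 * (a / (2 * (1 + a * L)))) / (a / (2 * (1 + a * L)))) ^ n + 1) := by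
          rw [ENNReal.one_le_ofReal]
          have : (0:ℝ) ≤ ((5 + 5 * L * (a / (2 * (1 + a * L))) + 5 * (a / (2 * (1 + a * L)))) / (a / (2 * (1 + a * L)))) ^ n := by positivity
          linarith
        rcases Nat.eq_zero_or_pos n with hn0 | hnpos
        · subst hn0
          rcases eq_empty_or_nonempty ({y | ENNReal.ofReal t < G' y} ∩ gdom φ)
            with hemp | ⟨y0, hy0⟩
          · rw [hμS, hemp]
            simp
          · have hδy0 : (0:ℝ) < gdel φ y0 := hy0.2
            have hNuniv : {q' : BPt 0 | ENNReal.ofReal t < N q' ^ p} = univ := by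
              refine eq_univ_iff_forall.mpr fun q' => ?_
              have h := hSsh y0 hy0 (mem_ball_self (by positivity))
              have : ENNReal.ofReal t < N (bdry y0) ^ p := h
              rwa [show q' = bdry y0 from Subsingleton.elim _ _]
            have hμSA : μ {y | ENNReal.ofReal t < G' y} ≤ A := by
              have hcov : (univ : Set (Pt 0)) =
                  ⋃ k : ℕ, ball (pt (φ (0 : BPt 0)) (0 : BPt 0)) (k + 1) := by
                refine (eq_univ_iff_forall.mpr fun y => ?_).symm
                obtain ⟨k, hk⟩ := exists_nat_gt (dist y (pt (φ (0 : BPt 0)) (0 : BPt 0)))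
                exact mem_iUnion.2 ⟨k, mem_ball.2 (hk.trans (lt_add_one _))⟩
              have hmono : Monotone fun k : ℕ =>
                  ball (pt (φ (0 : BPt 0)) (0 : BPt 0)) ((k:ℝ) + 1) := by
                intro i j hij
                exact ball_subset_ball (by exact_mod_cast add_le_add_left (Nat.cast_le.2 hij) 1)
              calc μ {y | ENNReal.ofReal t < G' y} ≤ μ univ := measure_mono (subset_univ _)
                _ ≤ A := by
                    rw [hcov, hmono.measure_iUnion]
                    refine iSup_le fun k => ?_
                    have h1 : μ (ball (pt (φ (0 : BPt 0)) (0 : BPt 0)) ((k:ℝ) + 1)) =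
                        μ (gdom φ ∩ ball (pt (φ (0 : BPt 0)) (0 : BPt 0)) ((k:ℝ) + 1)) := by
                      rw [hμapp _ measurableSet_ball, hμapp _ (hΩm.inter measurableSet_ball)]
                      rw [inter_assoc, inter_comm (ball _ _), ← inter_assoc, inter_self]
                    rw [h1]
                    calc μ (gdom φ ∩ ball (pt (φ (0 : BPt 0)) (0 : BPt 0)) ((k:ℝ) + 1))
                        ≤ A * volume (ball (0 : BPt 0) ((k:ℝ) + 1)) :=
                          hcarl_ball 0 _ (by positivity)
                      _ = A := by rw [vol_ball_bpt0 (by positivity), mul_one]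
            rw [hNuniv, vol_univ_bpt0]
            calc μ {y | ENNReal.ofReal t < G' y} ≤ A := hμSA
              _ = 1 * (A * 1) := by rw [one_mul, mul_one]
              _ ≤ _ := mul_le_mul_left hone _
        · by_cases hbd : ∃ R : ℝ, ∀ y ∈ {y | ENNReal.ofReal t < G' y} ∩ gdom φ,
              (a / (2 * (1 + a * L))) * gdel φ y ≤ R
          · obtain ⟨R, hR⟩ := hbd
            obtain ⟨U, hUsub, hUdisj, hUcov⟩ :=
              Vitali.exists_disjoint_subfamily_covering_enlargement
                (fun y : Pt n => ball (bdry y) ((a / (2 * (1 + a * L))) * gdel φ y))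
                ({y | ENNReal.ofReal t < G' y} ∩ gdom φ)
                (fun y => (a / (2 * (1 + a * L))) * gdel φ y) 4 (by norm_num)
                (fun y hy => by
                  have : (0:ℝ) < gdel φ y := hy.2
                  positivity)
                R hR
                (fun y hy => nonempty_ball.2 (by
                  have : (0:ℝ) < gdel φ y := hy.2
                  positivity))
            have hUc : U.Countable :=
              hUdisj.countable_of_isOpen (fun b _ => isOpen_ball)
                (fun b hb => nonempty_ball.2 (by
                  have : (0:ℝ) < gdel φ b := (hUsub hb).2
                  positivity))
            have hcov2 : {y | ENNReal.ofReal t < G' y} ∩ gdom φ ⊆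
                ⋃ b ∈ U, (gdom φ ∩ ball (pt (φ (bdry b)) (bdry b))
                  ((5 + 5 * L * (a / (2 * (1 + a * L))) + 5 * (a / (2 * (1 + a * L)))) * gdel φ b)) := by
              intro y hy
              obtain ⟨b, hbU, hint, hle⟩ := hUcov y hy
              exact mem_biUnion hbU
                ⟨hy.2, tent_geom hL ha hφ hy.2 (hUsub hbU).2 hint hle⟩
            have hball_comp : ∀ b ∈ U,
                volume (ball (0 : BPt n) ((5 + 5 * L * (a / (2 * (1 + a * L))) + 5 * (a / (2 * (1 + a * L)))) * gdel φ b)) =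
                  ENNReal.ofReal (((5 + 5 * L * (a / (2 * (1 + a * L))) + 5 * (a / (2 * (1 + a * L)))) / (a / (2 * (1 + a * L)))) ^ n) *
                    volume (ball (bdry b) ((a / (2 * (1 + a * L))) * gdel φ b)) := by
              intro b hb
              have hδb : (0:ℝ) < gdel φ b := (hUsub hb).2
              rw [vol_ball_eucl _ (by positivity), vol_ball_eucl (bdry b) (by positivity),
                ← mul_assoc, ← ENNReal.ofReal_mul (by positivity)]
              congr 2
              rw [← mul_pow]
              congr 1
              field_simp
            calc μ {y | ENNReal.ofReal t < G' y}
                = μ ({y | ENNReal.ofReal t < G' y} ∩ gdom φ) := by rw [hμS, hμS2]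
              _ ≤ μ (⋃ b ∈ U, (gdom φ ∩ ball (pt (φ (bdry b)) (bdry b))
                  ((5 + 5 * L * (a / (2 * (1 + a * L))) + 5 * (a / (2 * (1 + a * L)))) * gdel φ b))) := measure_mono hcov2
              _ ≤ ∑' b : U, μ (gdom φ ∩ ball (pt (φ (bdry (b:Pt n))) (bdry (b:Pt n)))
                  ((5 + 5 * L * (a / (2 * (1 + a * L))) + 5 * (a / (2 * (1 + a * L)))) * gdel φ (b:Pt n))) :=
                  measure_biUnion_le μ hUc _
              _ ≤ ∑' b : U, ENNReal.ofReal (((5 + 5 * L * (a / (2 * (1 + a * L))) + 5 * (a / (2 * (1 + a * L)))) / (a / (2 * (1 + a * L)))) ^ n) *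
                  (A * volume (ball (bdry (b:Pt n)) ((a / (2 * (1 + a * L))) * gdel φ (b:Pt n)))) := by
                  refine ENNReal.tsum_le_tsum fun b => ?_
                  have hδb : (0:ℝ) < gdel φ (b:Pt n) := (hUsub b.2).2
                  calc μ (gdom φ ∩ ball (pt (φ (bdry (b:Pt n))) (bdry (b:Pt n)))
                      ((5 + 5 * L * (a / (2 * (1 + a * L))) + 5 * (a / (2 * (1 + a * L)))) * gdel φ (b:Pt n)))
                      ≤ A * volume (ball (0 : BPt n)
                        ((5 + 5 * L * (a / (2 * (1 + a * L))) + 5 * (a / (2 * (1 + a * L)))) * gdel φ (b:Pt n))) :=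
                        hcarl_ball _ _ (by positivity)
                    _ = A * (ENNReal.ofReal (((5 + 5 * L * (a / (2 * (1 + a * L))) + 5 * (a / (2 * (1 + a * L)))) / (a / (2 * (1 + a * L)))) ^ n) *
                        volume (ball (bdry (b:Pt n)) ((a / (2 * (1 + a * L))) * gdel φ (b:Pt n)))) := by
                        rw [hball_comp _ b.2]
                    _ = ENNReal.ofReal (((5 + 5 * L * (a / (2 * (1 + a * L))) + 5 * (a / (2 * (1 + a * L)))) / (a / (2 * (1 + a * L)))) ^ n) *
                        (A * volume (ball (bdry (b:Pt n)) ((a / (2 * (1 + a * L))) * gdel φ (b:Pt n)))) := by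
                        ring
              _ = ENNReal.ofReal (((5 + 5 * L * (a / (2 * (1 + a * L))) + 5 * (a / (2 * (1 + a * L)))) / (a / (2 * (1 + a * L)))) ^ n) *
                  (A * ∑' b : U, volume (ball (bdry (b:Pt n)) ((a / (2 * (1 + a * L))) * gdel φ (b:Pt n)))) := by
                  rw [ENNReal.tsum_mul_left, ENNReal.tsum_mul_left]
              _ = ENNReal.ofReal (((5 + 5 * L * (a / (2 * (1 + a * L))) + 5 * (a / (2 * (1 + a * L)))) / (a / (2 * (1 + a * L)))) ^ n) *
                  (A * volume (⋃ b ∈ U, ball (bdry b) ((a / (2 * (1 + a * L))) * gdel φ b))) := by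
                  rw [measure_biUnion hUc hUdisj (fun b _ => measurableSet_ball)]
              _ ≤ ENNReal.ofReal (((5 + 5 * L * (a / (2 * (1 + a * L))) + 5 * (a / (2 * (1 + a * L)))) / (a / (2 * (1 + a * L)))) ^ n) *
                  (A * volume {q' : BPt n | ENNReal.ofReal t < N q' ^ p}) := by
                  refine mul_le_mul_right (mul_le_mul_right (measure_mono ?_) _) _
                  exact iUnion₂_subset fun b hb => hSsh b (hUsub hb)
              _ ≤ _ := by
                  refine mul_le_mul_left (ENNReal.ofReal_le_ofReal (by linarith)) _
          · push_neg at hbd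
            have hVn0 : volume (ball (0 : BPt n) 1) ≠ 0 :=
              (measure_ball_pos volume _ one_pos).ne'
            have hEtop : volume {q' : BPt n | ENNReal.ofReal t < N q' ^ p} = ∞ := by
              have hge : ∀ k : ℕ, (k : ℝ≥0∞) * volume (ball (0 : BPt n) 1) ≤
                  volume {q' : BPt n | ENNReal.ofReal t < N q' ^ p} := by
                intro k
                obtain ⟨y, hy, hky⟩ := hbd k
                have hδy : (0:ℝ) < gdel φ y := hy.2
                have h1 : volume (ball (bdry y) ((a / (2 * (1 + a * L))) * gdel φ y)) ≤
                    volume {q' : BPt n | ENNReal.ofReal t < N q' ^ p} :=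
                  measure_mono (hSsh y hy)
                rw [vol_ball_eucl _ (by positivity)] at h1
                refine le_trans ?_ h1
                have hkc : (k:ℝ) ≤ ((a / (2 * (1 + a * L))) * gdel φ y) ^ n := by
                  calc (k:ℝ) ≤ (k:ℝ) ^ n := by
                        rcases Nat.eq_zero_or_pos k with rfl | hk
                        · simp only [Nat.cast_zero]
                          positivity
                        · exact le_self_pow₀ (by exact_mod_cast hk) hnpos.ne'
                    _ ≤ ((a / (2 * (1 + a * L))) * gdel φ y) ^ n :=
                        pow_le_pow_left₀ (by positivity) hky.le n
                refine le_trans ?_ (mul_le_mul_left (ENNReal.ofReal_le_ofReal hkc) _)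
                rw [ENNReal.ofReal_natCast]
              refine top_le_iff.mp ?_
              calc (⊤:ℝ≥0∞) = ⊤ * volume (ball (0 : BPt n) 1) := (ENNReal.top_mul hVn0).symm
                _ = (⨆ k : ℕ, (k : ℝ≥0∞)) * volume (ball (0 : BPt n) 1) := by
                    rw [ENNReal.iSup_natCast]
                _ = ⨆ k : ℕ, (k : ℝ≥0∞) * volume (ball (0 : BPt n) 1) :=
                    ENNReal.iSup_mul _ _
                _ ≤ _ := iSup_le hge
            rw [hEtop, ENNReal.mul_top hA0, ENNReal.mul_top (by
              refine (ENNReal.ofReal_pos.2 ?_).ne'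
              have : (0:ℝ) ≤ ((5 + 5 * L * (a / (2 * (1 + a * L))) + 5 * (a / (2 * (1 + a * L)))) / (a / (2 * (1 + a * L)))) ^ n := by positivity
              linarith)]
            exact le_top
      calc (∫⁻ y in gdom φ, M y * G y ∂volume)
          = ∫⁻ y, G y ∂μ := htrans
        _ = ∫⁻ y, G' y ∂μ := hG'int
        _ = ∫⁻ t in Ioi (0:ℝ), μ {y | ENNReal.ofReal t < G' y} := layercake μ hG'm
        _ ≤ ∫⁻ t in Ioi (0:ℝ),
            ENNReal.ofReal (((5 + 5 * L * (a / (2 * (1 + a * L))) + 5 * (a / (2 * (1 + a * L)))) / (a / (2 * (1 + a * L)))) ^ n + 1) *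
              (A * volume {q' : BPt n | ENNReal.ofReal t < N q' ^ p}) :=
            lintegral_mono fun t => claim t
        _ = ENNReal.ofReal (((5 + 5 * L * (a / (2 * (1 + a * L))) + 5 * (a / (2 * (1 + a * L)))) / (a / (2 * (1 + a * L)))) ^ n + 1) *
            (A * ∫⁻ t in Ioi (0:ℝ), volume {q' : BPt n | ENNReal.ofReal t < N q' ^ p}) := by
            simp_rw [← mul_assoc]
            rw [lintegral_const_mul' _ _ (ENNReal.mul_ne_top ENNReal.ofReal_ne_top hCarl.ne)]
        _ = _ := by rw [← layercake volume hNp]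
    calc (∫⁻ x in gdom φ, (‖u x‖₊ : ℝ≥0∞) ^ p * f x)
        ≤ ENNReal.ofReal ((5 / 2 * (1 + L)) ^ (n + 1)) *
          ∫⁻ y in gdom φ, M y * G y ∂volume := stepA
      _ ≤ ENNReal.ofReal ((5 / 2 * (1 + L)) ^ (n + 1)) *
          (ENNReal.ofReal
              (((5 + 5 * L * (a / (2 * (1 + a * L))) + 5 * (a / (2 * (1 + a * L)))) /
                (a / (2 * (1 + a * L)))) ^ n + 1) *
            (A * ∫⁻ q' : BPt n, N q' ^ p)) := mul_le_mul_right stepB _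
      _ = _ := by
          rw [← mul_assoc, ← ENNReal.ofReal_mul (by positivity), ← mul_assoc]
end DP
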